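/- arXiv:2003.08164 — 7 statements merged into one kernel-verified Lean document; each statement's English description precedes it below -/
import Mathlib

section
/- Let a_1,...,a_ℓ be pairwise distinct vectors in ℕ^m with all entries positive. Then there exists a vector d ∈ ℕ^m with all entries at least 1 such that the products ∏_j a_{ij}^{d_j}, for i = 1,...,ℓ, are pairwise distinct. -/
/-!
Taking logarithms turns the products into the linear forms `∑ j, d j * log (a i j)`. With
`d j = t ^ j`, the difference of two of them is the value at `t` of the polynomial whose
coefficients are `log (a i j) - log (a i' j)`; it is nonzero for `i ≠ i'`, so it has finitely
many roots, and every large enough `t` separates all the products at once.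
-/

open Filter Function Polynomial

namespace Polynomial

theorem eval_ofFn {R : Type*} [Semiring R] [DecidableEq R] {n : ℕ} (v : Fin n → R) (x : R) :
    (ofFn n v).eval x = ∑ j, v j * x ^ (j : ℕ) := by
  simp [ofFn_eq_sum_monomial, eval_finsetSum]

theorem eventually_eval_natCast_ne_zero {R : Type*} [CommRing R] [IsDomain R] [CharZero R]
    {p : R[X]} (hp : p ≠ 0) : ∀ᶠ t : ℕ in atTop, p.eval (t : R) ≠ 0 := by
  rw [← Nat.cofinite_eq_atTop]
  exact ((p.finite_setOfPred_isRoot hp).preimage Nat.cast_injective.injOn)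
    |>.eventually_cofinite_notMem

end Polynomial

theorem eventually_injective_sum_mul_natCast_pow {ι R : Type*} [Finite ι] [CommRing R]
    [IsDomain R] [CharZero R] {m : ℕ} {v : ι → Fin m → R} (hv : Injective v) :
    ∀ᶠ t : ℕ in atTop, Injective fun i => ∑ j, v i j * (t : R) ^ (j : ℕ) := by
  classical
  have separates :
      ∀ i i', ∀ᶠ t : ℕ in atTop, (ofFn m (v i - v i')).eval (t : R) = 0 → i = i' := by
    intro i i'
    by_cases h : i = i'
    · exact Eventually.of_forall fun _ _ => h
    · have hp : ofFn m (v i - v i') ≠ 0 := by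
        rwa [map_sub, sub_ne_zero, (injective_ofFn m).ne_iff, hv.ne_iff]
      exact (eventually_eval_natCast_ne_zero hp).mono fun _ ht h0 => absurd h0 ht
  filter_upwards [eventually_all.2 fun i => eventually_all.2 (separates i)] with t ht i i' heq
  exact ht i i' (by rw [map_sub, eval_sub, eval_ofFn, eval_ofFn, sub_eq_zero]; exact heq)

theorem Real.log_natCast_prod_pow {ι : Type*} [Fintype ι] {b : ι → ℕ} (hb : ∀ j, 0 < b j)
    (d : ι → ℕ) : Real.log (∏ j, b j ^ d j : ℕ) = ∑ j, Real.log (b j) * d j := by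
  push_cast
  rw [Real.log_prod fun j _ => pow_ne_zero _ (Nat.cast_ne_zero.2 (hb j).ne')]
  simp [Real.log_pow, mul_comm]

/-- For pairwise distinct vectors `a i ∈ ℕ^m` with positive entries, there is an
exponent vector `d` with all entries at least 1 making the products `∏ j, (a i j)^(d j)`
pairwise distinct. -/
theorem stmt2 (ℓ m : ℕ) (a : Fin ℓ → Fin m → ℕ)
    (hpos : ∀ i j, 0 < a i j) (hdist : Function.Injective a) :
    ∃ d : Fin m → ℕ, (∀ j, 1 ≤ d j) ∧
      Function.Injective (fun i : Fin ℓ => ∏ j, (a i j) ^ (d j)) := by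
  have hlog : Injective fun i j => Real.log (a i j) := by
    refine fun i i' h => hdist (funext fun j => ?_)
    exact_mod_cast Real.log_injOn_pos (Set.mem_Ioi.2 (Nat.cast_pos.2 (hpos i j)))
      (Set.mem_Ioi.2 (Nat.cast_pos.2 (hpos i' j))) (congrFun h j)
  obtain ⟨t, hinj, ht⟩ :=
    ((eventually_injective_sum_mul_natCast_pow hlog).and (eventually_ge_atTop 1)).exists
  refine ⟨fun j => t ^ (j : ℕ), fun j => Nat.one_le_pow _ _ ht, ?_⟩
  refine Injective.of_comp (f := fun n : ℕ => Real.log n) ?_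
  convert hinj using 2 with i
  simp only [comp_apply, Real.log_natCast_prod_pow (hpos i), Nat.cast_pow]
end

section
/- Let G be a graph with an elimination tree T of height k, let f : V(G) → V(G) be an idempotent map with f(u) ⪯_T u for all u, and let H be the image graph with V(H) = f(V(G)) and E(H) = {f(u)f(u') : uu' ∈ E(G)}. Then the restriction of ⪯_T to V(H) is an elimination tree of H of height at most k; in particular V(H) has a unique ⪯_T-minimal element, namely the root of T. -/
theorem comparable_of_le_of_le_of_comparable {V : Type} [Preorder V]
    (hchain : ∀ t : V, IsChain (· ≤ ·) {u : V | u ≤ t}) {a b x y : V}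
    (ha : a ≤ x) (hb : b ≤ y) (hxy : x ≤ y ∨ y ≤ x) : a ≤ b ∨ b ≤ a := by
  rcases hxy with hxy | hyx
  · exact (hchain y).total (ha.trans hxy) hb
  · exact (hchain x).total ha (hb.trans hyx)

theorem stmt7_general {V : Type} [PartialOrder V] (k : ℕ)
    (G : SimpleGraph V)
    (hchain : ∀ t : V, IsChain (· ≤ ·) {u : V | u ≤ t})
    (r : V) (hroot : ∀ v, r ≤ v)
    (helim : ∀ u v, G.Adj u v → u ≤ v ∨ v ≤ u)
    (hheight : ∀ C : Finset V, IsChain (· ≤ ·) (C : Set V) → C.card ≤ k)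
    (f : V → V) (hshrink : ∀ u, f u ≤ u) :
    (∀ u u', G.Adj u u' → f u ≤ f u' ∨ f u' ≤ f u) ∧
    (∀ C : Finset V, (C : Set V) ⊆ Set.range f → IsChain (· ≤ ·) (C : Set V) → C.card ≤ k) ∧
    r ∈ Set.range f ∧ (∀ x ∈ Set.range f, r ≤ x) :=
  ⟨fun u u' hadj =>
      comparable_of_le_of_le_of_comparable hchain (hshrink u) (hshrink u') (helim u u' hadj),
    fun C _ hC => hheight C hC,
    ⟨r, le_antisymm (hshrink r) (hroot (f r))⟩,
    fun x _ => hroot x⟩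

/-- Lemma 1: if `f` is an idempotent shrinking map on a graph `G` with elimination tree
of height at most `k` (root `r`), then the restriction of the tree order to the image of
`f` is an elimination tree of the image graph `H` (whose edges are the `f`-images of the
edges of `G`) of height at most `k`, and the image has the root `r` as its unique minimal
element. -/
theorem stmt7 {V : Type} [Finite V] [PartialOrder V] (k : ℕ)
    (G : SimpleGraph V)
    (hchain : ∀ t : V, IsChain (· ≤ ·) {u : V | u ≤ t})
    (r : V) (hroot : ∀ v, r ≤ v)
    (helim : ∀ u v, G.Adj u v → u ≤ v ∨ v ≤ u)
    (hheight : ∀ C : Finset V, IsChain (· ≤ ·) (C : Set V) → C.card ≤ k)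
    (f : V → V) (hidem : ∀ u, f (f u) = f u) (hshrink : ∀ u, f u ≤ u) :
    (∀ u u', G.Adj u u' → f u ≤ f u' ∨ f u' ≤ f u) ∧
    (∀ C : Finset V, (C : Set V) ⊆ Set.range f → IsChain (· ≤ ·) (C : Set V) → C.card ≤ k) ∧
    r ∈ Set.range f ∧ (∀ x ∈ Set.range f, r ≤ x) :=
  stmt7_general k G hchain r hroot helim hheight f hshrink
end

section
/- Let D = (F,T) where T is an elimination tree of F, and let h : F → H be a graph homomorphism. Then there exist a graph G with V(G) ⊆ V(F) and γ-colours inherited from F, a shrinking epimorphism f : D → G, and a past-injective homomorphism g : (G, T[V(G)]) → H such that h = g ∘ f. Moreover this factorization (G, f, g) is unique. -/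
/-- `(S, Gadj, f, g)` is a factorization of the homomorphism `h` from the coloured graph
`(F, γF)` (equipped with a tree order on its vertices) to `(H, γH)`: the graph `G`
(vertex set `S`, adjacency `Gadj`, colours inherited from `F`) is the image of the
shrinking epimorphism `f`, and `g` is a past-injective homomorphism from `G` to `H`
with `h = g ∘ f`. -/
def IsFactorization {V W : Type} [PartialOrder V]
    (F : SimpleGraph V) (γF : V → ℕ) (H : SimpleGraph W) (γH : W → ℕ)
    (h : V → W) (S : Set V) (Gadj : V → V → Prop) (f : V → V) (g : V → W) : Prop :=
  Set.range f = S ∧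
  Symmetric Gadj ∧ (∀ u, ¬ Gadj u u) ∧ (∀ u v, Gadj u v → u ∈ S ∧ v ∈ S) ∧
  (∀ u, f (f u) = f u) ∧ (∀ u, f u ≤ u) ∧
  (∀ u v, F.Adj u v → Gadj (f u) (f v)) ∧
  (∀ v v', Gadj v v' → ∃ u u', F.Adj u u' ∧ f u = v ∧ f u' = v') ∧
  (∀ v v', Gadj v v' → H.Adj (g v) (g v')) ∧
  (∀ v ∈ S, γH (g v) = γF v) ∧
  (∀ v v', v ∈ S → v' ∈ S → v < v' → g v ≠ g v') ∧
  (∀ u, h u = g (f u))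

/-!
`h` factors through the retraction `f` sending each vertex `u` to the least vertex below `u`
with the same image under `h`; this least vertex exists because the vertices below `u` form a
finite chain. Conversely, in any factorization `h = g ∘ f'` the vertices `f' v` and `f' u`, for
`v ≤ u` with `h v = h u`, both lie below `u`, hence are comparable, and have the same image under
`g`; past-injectivity makes them equal, so `f' u = f' v ≤ v`. Thus `f' u` is again the least
element of that set, which pins down `f'`, and with it the graph `G` and `g` on `V(G)`.
-/

theorem IsChain.exists_isLeast_of_finite {α : Type*} [PartialOrder α] {s : Set α}
    (hs : IsChain (· ≤ ·) s) (hfin : s.Finite) (hne : s.Nonempty) : ∃ m, IsLeast s m := by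
  obtain ⟨m, hm⟩ := hfin.exists_minimal hne
  refine ⟨m, hm.prop, fun v hv => ?_⟩
  rcases eq_or_ne m v with rfl | hmv
  · exact le_rfl
  rcases hs hm.prop hv hmv with hle | hle
  · exact hle
  · exact hm.le_of_le hv hle

section PastFiber

variable {V W : Type} [PartialOrder V]

def pastFiber (h : V → W) (u : V) : Set V := {v | v ≤ u ∧ h v = h u}

theorem exists_isLeast_pastFiber [Finite V] (hchain : ∀ t : V, IsChain (· ≤ ·) {u : V | u ≤ t})
    (h : V → W) (u : V) : ∃ m, IsLeast (pastFiber h u) m :=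
  ((hchain u).mono fun _ hv => hv.1).exists_isLeast_of_finite (Set.toFinite _) ⟨u, le_rfl, rfl⟩

variable {h : V → W} {f : V → V}

theorem idempotent_of_isLeast_pastFiber (hf : ∀ u, IsLeast (pastFiber h u) (f u)) (u : V) :
    f (f u) = f u := by
  obtain ⟨⟨hfu_le, hfu_eq⟩, _⟩ := hf u
  obtain ⟨⟨hffu_le, hffu_eq⟩, _⟩ := hf (f u)
  exact le_antisymm hffu_le ((hf u).2 ⟨hffu_le.trans hfu_le, hffu_eq.trans hfu_eq⟩)

theorem isFactorization_of_isLeast_pastFiber {F : SimpleGraph V} {γF : V → ℕ}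
    {H : SimpleGraph W} {γH : W → ℕ} (hhom : ∀ u v, F.Adj u v → H.Adj (h u) (h v))
    (hcol : ∀ u, γH (h u) = γF u) (hf : ∀ u, IsLeast (pastFiber h u) (f u)) :
    IsFactorization F γF H γH h (Set.range f) (Relation.Map F.Adj f f) f h := by
  have hle (u : V) : f u ≤ u := (hf u).1.1
  have hfh (u : V) : h (f u) = h u := (hf u).1.2
  refine ⟨rfl, ?_, ?_, ?_, idempotent_of_isLeast_pastFiber hf, hle, ?_, fun _ _ => id, ?_,
    fun v _ => hcol v, ?_, fun u => (hfh u).symm⟩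
  · rintro _ _ ⟨u, u', hadj, rfl, rfl⟩
    exact ⟨u', u, hadj.symm, rfl, rfl⟩
  · rintro _ ⟨u, u', hadj, rfl, hfu⟩
    exact (hhom u u' hadj).ne (by rw [← hfh u, ← hfh u', hfu])
  · rintro _ _ ⟨u, u', -, rfl, rfl⟩
    exact ⟨⟨u, rfl⟩, ⟨u', rfl⟩⟩
  · exact fun u u' hadj => ⟨u, u', hadj, rfl, rfl⟩
  · rintro _ _ ⟨u, u', hadj, rfl, rfl⟩
    rw [hfh, hfh]
    exact hhom u u' hadj
  · rintro v _ - ⟨w, rfl⟩ hlt hgv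
    rw [hfh] at hgv
    exact hlt.not_ge ((hf w).2 ⟨hlt.le.trans (hle w), hgv⟩)

end PastFiber

namespace IsFactorization

variable {V W : Type} [PartialOrder V] {F : SimpleGraph V} {γF : V → ℕ} {H : SimpleGraph W}
  {γH : W → ℕ} {h : V → W} {S : Set V} {Gadj : V → V → Prop} {f : V → V} {g : V → W}

theorem isLeast_pastFiber (hchain : ∀ t : V, IsChain (· ≤ ·) {u : V | u ≤ t})
    (hfac : IsFactorization F γF H γH h S Gadj f g) (u : V) : IsLeast (pastFiber h u) (f u) := by
  obtain ⟨hrange, -, -, -, hidem, hle, -, -, -, -, hinj, hcomp⟩ := hfac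
  have hS (v : V) : f v ∈ S := hrange ▸ ⟨v, rfl⟩
  refine ⟨⟨hle u, by rw [hcomp (f u), hidem, ← hcomp]⟩, fun v ⟨hvu, hhv⟩ => ?_⟩
  suffices f v = f u from this ▸ hle v
  by_contra hne
  have hg : g (f v) = g (f u) := by rw [← hcomp, ← hcomp, hhv]
  rcases hchain u ((hle v).trans hvu) (hle u) hne with hlt | hlt
  · exact hinj _ _ (hS v) (hS u) (lt_of_le_of_ne hlt hne) hg
  · exact hinj _ _ (hS u) (hS v) (lt_of_le_of_ne hlt (Ne.symm hne)) hg.symm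

theorem adj_eq_map (hfac : IsFactorization F γF H γH h S Gadj f g) :
    Gadj = Relation.Map F.Adj f f := by
  obtain ⟨-, -, -, -, -, -, hpush, hsurj, -⟩ := hfac
  ext v v'
  exact ⟨hsurj v v', fun ⟨u, u', hadj, hu, hu'⟩ => hu ▸ hu' ▸ hpush u u' hadj⟩

theorem apply_eq_of_mem (hfac : IsFactorization F γF H γH h S Gadj f g) {v : V} (hv : v ∈ S) :
    g v = h v := by
  obtain ⟨hrange, -, -, -, hidem, -, -, -, -, -, -, hcomp⟩ := hfac
  obtain ⟨w, rfl⟩ := hrange ▸ hv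
  rw [hcomp, hidem]

end IsFactorization

theorem stmt9_general {V W : Type} [Finite V] [PartialOrder V]
    (F : SimpleGraph V) (γF : V → ℕ) (H : SimpleGraph W) (γH : W → ℕ)
    (hchain : ∀ t : V, IsChain (· ≤ ·) {u : V | u ≤ t})
    (h : V → W)
    (hhom : ∀ u v, F.Adj u v → H.Adj (h u) (h v))
    (hcol : ∀ u, γH (h u) = γF u) :
    ∃ S Gadj f g, IsFactorization F γF H γH h S Gadj f g ∧
      ∀ S' Gadj' f' g', IsFactorization F γF H γH h S' Gadj' f' g' →
        S' = S ∧ Gadj' = Gadj ∧ f' = f ∧ ∀ v ∈ S, g' v = g v := by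
  choose f hf using exists_isLeast_pastFiber hchain h
  refine ⟨_, _, f, h, isFactorization_of_isLeast_pastFiber hhom hcol hf,
    fun S' Gadj' f' g' hfac => ?_⟩
  obtain rfl : f' = f := funext fun u => (hfac.isLeast_pastFiber hchain u).unique (hf u)
  exact ⟨hfac.1.symm, hfac.adj_eq_map, rfl, fun v hv => hfac.apply_eq_of_mem (hfac.1 ▸ hv)⟩

/-- Lemma 2: every homomorphism `h` from a graph with an elimination tree to `H`
factors uniquely as a past-injective homomorphism after a shrinking epimorphism. -/
theorem stmt9 {V W : Type} [Finite V] [PartialOrder V]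
    (F : SimpleGraph V) (γF : V → ℕ) (H : SimpleGraph W) (γH : W → ℕ)
    (hchain : ∀ t : V, IsChain (· ≤ ·) {u : V | u ≤ t})
    (r : V) (hroot : ∀ v, r ≤ v)
    (helim : ∀ u v, F.Adj u v → u ≤ v ∨ v ≤ u)
    (h : V → W)
    (hhom : ∀ u v, F.Adj u v → H.Adj (h u) (h v))
    (hcol : ∀ u, γH (h u) = γF u) :
    ∃ S Gadj f g, IsFactorization F γF H γH h S Gadj f g ∧
      ∀ S' Gadj' f' g', IsFactorization F γF H γH h S' Gadj' f' g' →
        S' = S ∧ Gadj' = Gadj ∧ f' = f ∧ ∀ v ∈ S, g' v = g v :=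
  stmt9_general F γF H γH hchain h hhom hcol
end

section
/- Let D = (F,T) with T an elimination tree of F, and let h : F → H be a past-injective homomorphism. Then there is a unique graph G ⊇ F with V(G) = V(F) such that T is an elimination tree of G and h is a past-preserving homomorphism from (G,T) to H. -/
/-!
The completion is forced: an edge of `G` joins comparable vertices, and on a comparable pair
`u ≤ v` past-preservation prescribes it to be exactly an edge of `H` between the images. So `G`
is the pullback of `H` along `h` restricted to comparable pairs, and this graph contains `F`
because `F` only has edges between comparable vertices and `h` is a homomorphism.
-/

namespace SimpleGraph

variable {V W : Type*} [PartialOrder V]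

theorem le_of_adj_imp_of_le {G₁ G₂ : SimpleGraph V}
    (hG₁ : ∀ u v, G₁.Adj u v → u ≤ v ∨ v ≤ u)
    (hle : ∀ u v, u ≤ v → G₁.Adj u v → G₂.Adj u v) : G₁ ≤ G₂ := by
  intro u v huv
  rcases hG₁ u v huv with h | h
  · exact hle u v h huv
  · exact (hle v u h huv.symm).symm

theorem ext_of_adj_iff_of_le {G₁ G₂ : SimpleGraph V}
    (hG₁ : ∀ u v, G₁.Adj u v → u ≤ v ∨ v ≤ u) (hG₂ : ∀ u v, G₂.Adj u v → u ≤ v ∨ v ≤ u)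
    (hle : ∀ u v, u ≤ v → (G₁.Adj u v ↔ G₂.Adj u v)) : G₁ = G₂ :=
  le_antisymm (le_of_adj_imp_of_le hG₁ fun u v huv => (hle u v huv).1)
    (le_of_adj_imp_of_le hG₂ fun u v huv => (hle u v huv).2)

def pastCompletion (H : SimpleGraph W) (h : V → W) : SimpleGraph V :=
  H.comap h ⊓ fromRel (· ≤ ·)

variable {H : SimpleGraph W} {h : V → W}

@[simp]
theorem pastCompletion_adj {u v : V} :
    (pastCompletion H h).Adj u v ↔ H.Adj (h u) (h v) ∧ u ≠ v ∧ (u ≤ v ∨ v ≤ u) := by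
  simp [pastCompletion]

theorem pastCompletion_adj_comparable {u v : V} (huv : (pastCompletion H h).Adj u v) :
    u ≤ v ∨ v ≤ u :=
  (pastCompletion_adj.1 huv).2.2

theorem pastCompletion_adj_iff_of_le {u v : V} (huv : u ≤ v) :
    (pastCompletion H h).Adj u v ↔ H.Adj (h u) (h v) :=
  ⟨fun hadj => (pastCompletion_adj.1 hadj).1,
    fun hadj => pastCompletion_adj.2 ⟨hadj, fun he => H.irrefl (he ▸ hadj), .inl huv⟩⟩

theorem le_pastCompletion {F : SimpleGraph V}
    (helim : ∀ u v, F.Adj u v → u ≤ v ∨ v ≤ u) (hhom : ∀ u v, F.Adj u v → H.Adj (h u) (h v)) :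
    F ≤ pastCompletion H h :=
  fun u v huv => pastCompletion_adj.2 ⟨hhom u v huv, huv.ne, helim u v huv⟩

end SimpleGraph

theorem stmt11_general {V W : Type} [PartialOrder V]
    (F : SimpleGraph V) (H : SimpleGraph W)
    (helim : ∀ u v, F.Adj u v → u ≤ v ∨ v ≤ u)
    (h : V → W)
    (hhom : ∀ u v, F.Adj u v → H.Adj (h u) (h v)) :
    ∃! G : SimpleGraph V, F ≤ G ∧ (∀ u v, G.Adj u v → u ≤ v ∨ v ≤ u) ∧
      (∀ u v : V, u ≤ v → (G.Adj u v ↔ H.Adj (h u) (h v))) := by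
  open SimpleGraph in
  exact ⟨pastCompletion H h,
    ⟨le_pastCompletion helim hhom, fun _ _ => pastCompletion_adj_comparable,
      fun _ _ => pastCompletion_adj_iff_of_le⟩,
    fun G ⟨_, hG, hGH⟩ => ext_of_adj_iff_of_le hG (fun _ _ => pastCompletion_adj_comparable)
      fun u v huv => (hGH u v huv).trans (pastCompletion_adj_iff_of_le huv).symm⟩

/-- Unique edge completion: if `h` is a past-injective homomorphism from `(F,T)` to `H`,
then there is a unique graph `G ⊇ F` on the same (coloured) vertex set such that `T` is an
elimination tree of `G` and `h` is a past-preserving homomorphism from `(G,T)` to `H`. -/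
theorem stmt11 {V W : Type} [Finite V] [PartialOrder V]
    (F : SimpleGraph V) (γF : V → ℕ) (H : SimpleGraph W) (γH : W → ℕ)
    (hchain : ∀ t : V, IsChain (· ≤ ·) {u : V | u ≤ t})
    (r : V) (hroot : ∀ v, r ≤ v)
    (helim : ∀ u v, F.Adj u v → u ≤ v ∨ v ≤ u)
    (h : V → W)
    (hhom : ∀ u v, F.Adj u v → H.Adj (h u) (h v))
    (hcol : ∀ u, γH (h u) = γF u)
    (hpi : ∀ u v : V, u < v → h u ≠ h v) :
    ∃! G : SimpleGraph V, F ≤ G ∧ (∀ u v, G.Adj u v → u ≤ v ∨ v ≤ u) ∧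
      (∀ u v : V, u ≤ v → (G.Adj u v ↔ H.Adj (h u) (h v))) :=
  stmt11_general F H helim h hhom
end

section
/- Let D = (F,T) with T an elimination tree of F of height at most k, and H any graph. Then pi-hom(D,H) = Σ_G pp-hom((G,T),H), where the sum ranges over all graphs G ⊇ F with V(G) = V(F) such that T is an elimination tree of G. -/
/-!
A past-injective homomorphism `h : F → H` determines exactly one graph `G ⊇ F` on `V(F)` for which
`T` is still an elimination tree and `h` is past-preserving: join two comparable vertices exactly
when their images are adjacent in `H`. Sorting the homomorphisms by this graph gives the identity.
-/

namespace SimpleGraph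

variable {V W : Type*} [LE V] {H : SimpleGraph W} {h : V → W}

variable (H h) in
def comapComparable : SimpleGraph V := H.comap h ⊓ fromRel (· ≤ ·)

theorem comapComparable_adj {u v : V} :
    (H.comapComparable h).Adj u v ↔ H.Adj (h u) (h v) ∧ (u ≤ v ∨ v ≤ u) := by
  simp only [comapComparable, inf_adj, comap_adj, fromRel_adj]
  exact ⟨fun ⟨hadj, _, hcomp⟩ => ⟨hadj, hcomp⟩,
    fun ⟨hadj, hcomp⟩ => ⟨hadj, ne_of_apply_ne h hadj.ne, hcomp⟩⟩

theorem eq_comapComparable_iff {G : SimpleGraph V} :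
    G = H.comapComparable h ↔
      (∀ u v, G.Adj u v → u ≤ v ∨ v ≤ u) ∧
        ∀ u v, u ≤ v → (G.Adj u v ↔ H.Adj (h u) (h v)) := by
  constructor
  · rintro rfl
    exact ⟨fun u v huv => (comapComparable_adj.1 huv).2,
      fun u v hle => by simp [comapComparable_adj, hle]⟩
  · rintro ⟨hcomp, hpp⟩
    ext u v
    rw [comapComparable_adj]
    constructor
    · intro huv
      refine ⟨?_, hcomp u v huv⟩
      rcases hcomp u v huv with hle | hle
      · exact (hpp u v hle).1 huv
      · exact ((hpp v u hle).1 huv.symm).symm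
    · rintro ⟨hadj, hle | hle⟩
      · exact (hpp u v hle).2 hadj
      · exact ((hpp v u hle).2 hadj.symm).symm

theorem hom_and_comapComparable_eq_iff {F G : SimpleGraph V}
    (hF : ∀ u v, F.Adj u v → u ≤ v ∨ v ≤ u) :
    ((∀ u v, F.Adj u v → H.Adj (h u) (h v)) ∧ H.comapComparable h = G) ↔
      (F ≤ G ∧ ∀ u v, G.Adj u v → u ≤ v ∨ v ≤ u) ∧
        (∀ u v, G.Adj u v → H.Adj (h u) (h v)) ∧
          ∀ u v, u ≤ v → (G.Adj u v ↔ H.Adj (h u) (h v)) := by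
  rw [eq_comm, eq_comapComparable_iff]
  constructor
  · rintro ⟨hhom, hcomp, hpp⟩
    have hG : G = H.comapComparable h := eq_comapComparable_iff.2 ⟨hcomp, hpp⟩
    refine ⟨⟨fun u v huv => ?_, hcomp⟩, fun u v huv => ?_, hpp⟩
    · rw [hG, comapComparable_adj]
      exact ⟨hhom u v huv, hF u v huv⟩
    · rw [hG] at huv
      exact (comapComparable_adj.1 huv).1
  · rintro ⟨⟨hFG, hcomp⟩, hhom, hpp⟩
    exact ⟨fun u v huv => hhom u v (hFG huv), hcomp, hpp⟩

open Classical in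
theorem card_hom_eq_sum_card_pastPreserving [Fintype V] [DecidableEq V] [Fintype W]
    {F : SimpleGraph V} (hF : ∀ u v, F.Adj u v → u ≤ v ∨ v ≤ u) (R : (V → W) → Prop) :
    Nat.card {h : V → W // (∀ u v, F.Adj u v → H.Adj (h u) (h v)) ∧ R h} =
      ∑ G : SimpleGraph V,
        if F ≤ G ∧ (∀ u v, G.Adj u v → u ≤ v ∨ v ≤ u) then
          Nat.card {h : V → W // (∀ u v, G.Adj u v → H.Adj (h u) (h v)) ∧ R h ∧
            ∀ u v, u ≤ v → (G.Adj u v ↔ H.Adj (h u) (h v))}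
        else 0 := by
  rw [← Nat.card_congr (Equiv.sigmaFiberEquiv fun h : {h : V → W //
    (∀ u v, F.Adj u v → H.Adj (h u) (h v)) ∧ R h} => H.comapComparable h.1), Nat.card_sigma]
  refine Finset.sum_congr rfl fun G _ => ?_
  rw [Nat.card_congr (Equiv.subtypeSubtypeEquivSubtypeInter _ (H.comapComparable · = G))]
  split_ifs with hG
  · refine Nat.card_congr (Equiv.subtypeEquivRight fun h => ?_)
    have := hom_and_comapComparable_eq_iff (H := H) (h := h) (G := G) hF
    tauto
  · rw [Nat.card_eq_zero]
    refine Or.inl ⟨fun ⟨h, ⟨hhom, _⟩, hfiber⟩ => hG ?_⟩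
    exact ((hom_and_comapComparable_eq_iff hF).1 ⟨hhom, hfiber⟩).1

end SimpleGraph

open Classical in
theorem stmt12_general {V W : Type} [Fintype V] [DecidableEq V] [Fintype W] [PartialOrder V]
    (F : SimpleGraph V) (γF : V → ℕ) (H : SimpleGraph W) (γH : W → ℕ)
    (helim : ∀ u v, F.Adj u v → u ≤ v ∨ v ≤ u) :
    Nat.card {h : V → W //
        (∀ u v, F.Adj u v → H.Adj (h u) (h v)) ∧ (∀ u, γH (h u) = γF u) ∧
        (∀ u v : V, u < v → h u ≠ h v)} =
      ∑ G : SimpleGraph V,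
        if F ≤ G ∧ (∀ u v, G.Adj u v → u ≤ v ∨ v ≤ u) then
          Nat.card {h : V → W //
            (∀ u v, G.Adj u v → H.Adj (h u) (h v)) ∧ (∀ u, γH (h u) = γF u) ∧
            (∀ u v : V, u < v → h u ≠ h v) ∧
            (∀ u v : V, u ≤ v → (G.Adj u v ↔ H.Adj (h u) (h v)))}
        else 0 := by
  simpa only [and_assoc] using SimpleGraph.card_hom_eq_sum_card_pastPreserving (H := H) helim
    fun h => (∀ u, γH (h u) = γF u) ∧ ∀ u v : V, u < v → h u ≠ h v

open Classical in
/-- Corollary: `pi-hom(D,H)` equals the sum of `pp-hom((G,T),H)` over all graphs `G ⊇ F`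
on the same vertex set for which `T` is still an elimination tree, where `D = (F,T)`
has an elimination tree `T` of height at most `k`. -/
theorem stmt12 {V W : Type} [Fintype V] [DecidableEq V] [Fintype W] [PartialOrder V]
    (k : ℕ)
    (F : SimpleGraph V) (γF : V → ℕ) (H : SimpleGraph W) (γH : W → ℕ)
    (hchain : ∀ t : V, IsChain (· ≤ ·) {u : V | u ≤ t})
    (r : V) (hroot : ∀ v, r ≤ v)
    (helim : ∀ u v, F.Adj u v → u ≤ v ∨ v ≤ u)
    (hheight : ∀ C : Finset V, IsChain (· ≤ ·) (C : Set V) → C.card ≤ k) :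
    Nat.card {h : V → W //
        (∀ u v, F.Adj u v → H.Adj (h u) (h v)) ∧ (∀ u, γH (h u) = γF u) ∧
        (∀ u v : V, u < v → h u ≠ h v)} =
      ∑ G : SimpleGraph V,
        if F ≤ G ∧ (∀ u v, G.Adj u v → u ≤ v ∨ v ≤ u) then
          Nat.card {h : V → W //
            (∀ u v, G.Adj u v → H.Adj (h u) (h v)) ∧ (∀ u, γH (h u) = γF u) ∧
            (∀ u v : V, u < v → h u ≠ h v) ∧
            (∀ u v : V, u ≤ v → (G.Adj u v ↔ H.Adj (h u) (h v)))}
        else 0 :=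
  stmt12_general F γF H γH helim
end

section
/- For all k ≥ 1 and all graphs G, G' of the same order, Duplicator has a winning strategy in the k-round bijective pebble game on G and G' if and only if G and G' satisfy the same sentences of first-order logic with counting quantifiers of quantifier rank at most k. -/
/-- Formulas of first-order logic with counting quantifiers over coloured graphs,
with free variables among `Fin n` (colours are natural numbers). -/
inductive CFormula : ℕ → Type
  | eq {n : ℕ} (i j : Fin n) : CFormula n
  | adj {n : ℕ} (i j : Fin n) : CFormula n
  | col {n : ℕ} (i : Fin n) (c : ℕ) : CFormula n
  | not {n : ℕ} : CFormula n → CFormula n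
  | or {n : ℕ} : CFormula n → CFormula n → CFormula n
  /-- the counting quantifier `∃^{≥p} x φ` binding the last variable -/
  | count {n : ℕ} (p : ℕ) : CFormula (n + 1) → CFormula n

/-- Quantifier rank of a counting formula. -/
def CFormula.qr : ∀ {n : ℕ}, CFormula n → ℕ
  | _, .eq _ _ => 0
  | _, .adj _ _ => 0
  | _, .col _ _ => 0
  | _, .not φ => φ.qr
  | _, .or φ ψ => max φ.qr ψ.qr
  | _, .count _ φ => φ.qr + 1

/-- Satisfaction of a counting formula in a coloured graph under an assignment. -/
def CSat {V : Type} (G : SimpleGraph V) (γ : V → ℕ) :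
    ∀ {n : ℕ}, CFormula n → (Fin n → V) → Prop
  | _, .eq i j, a => a i = a j
  | _, .adj i j, a => G.Adj (a i) (a j)
  | _, .col i c, a => γ (a i) = c
  | _, .not φ, a => ¬ CSat G γ φ a
  | _, .or φ ψ, a => CSat G γ φ a ∨ CSat G γ ψ a
  | _, .count p φ, a => ∃ s : Finset V, s.card = p ∧ ∀ v ∈ s, CSat G γ φ (Fin.snoc a v)

/-- A position of the bijective pebble game is a local isomorphism. -/
def LocalIso {V V' C : Type} (G : SimpleGraph V) (γ : V → C)
    (G' : SimpleGraph V') (γ' : V' → C) (l : List (V × V')) : Prop :=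
  (∀ p ∈ l, γ p.1 = γ' p.2) ∧
  ∀ p ∈ l, ∀ q ∈ l, (p.1 = q.1 ↔ p.2 = q.2) ∧ (G.Adj p.1 q.1 ↔ G'.Adj p.2 q.2)

/-- Duplicator has a winning strategy in the `k`-round bijective pebble game from the
given position: in each round she picks a bijection, Spoiler picks a vertex, and after
`k` rounds the position must be a local isomorphism. -/
def DWin {V V' C : Type} (G : SimpleGraph V) (γ : V → C)
    (G' : SimpleGraph V') (γ' : V' → C) : ℕ → List (V × V') → Prop
  | 0, l => LocalIso G γ G' γ' l
  | k + 1, l => ∃ f : V ≃ V', ∀ v : V, DWin G γ G' γ' k ((v, f v) :: l)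

/-!
Both sides obey the same recursion in `k`. Write `a ≡ₖ a'` (`CEquiv`) when two pebble
assignments satisfy the same counting formulas of rank at most `k`. For finite graphs,
`a ≡ₖ₊₁ a'` holds iff some bijection `f : V ≃ V'` gives `snoc a v ≡ₖ snoc a' (f v)` for every
`v`, which is one round of the bijective game. Given `f`, it transports the witnesses of every
counting quantifier. Conversely, `f` is assembled fibrewise over the rank-`k` types of the
extensions: among the finitely many points of `V ⊕ V'` each type is isolated by one formula `θ`
of rank `k`, and the sentences `∃^{≥p} x θ` of rank `k + 1` force its fibres in `V` and in `V'`
to have the same size.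
-/

open Fin

namespace CFormula

def and {n : ℕ} (φ ψ : CFormula n) : CFormula n := .not (.or (.not φ) (.not ψ))

def conj {n : ℕ} : List (CFormula (n + 1)) → CFormula (n + 1)
  | [] => .eq (last n) (last n)
  | φ :: L => φ.and (conj L)

theorem qr_conj_le {n k : ℕ} {L : List (CFormula (n + 1))} (h : ∀ φ ∈ L, φ.qr ≤ k) :
    (conj L).qr ≤ k := by
  induction L with
  | nil => exact Nat.zero_le k
  | cons φ L ih =>
    simp only [List.forall_mem_cons] at h
    exact max_le h.1 (ih h.2)

end CFormula

section
variable {V V' : Type} (G : SimpleGraph V) (γ : V → ℕ) (G' : SimpleGraph V') (γ' : V' → ℕ)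

theorem cSat_conj {n : ℕ} {L : List (CFormula (n + 1))} {a : Fin (n + 1) → V} :
    CSat G γ (.conj L) a ↔ ∀ φ ∈ L, CSat G γ φ a := by
  induction L with
  | nil => simp [CFormula.conj, CSat]
  | cons φ L ih => simp [CFormula.conj, CFormula.and, CSat, ih, not_or]

theorem cSat_count_iff [Finite V] {n p : ℕ} {φ : CFormula (n + 1)} {a : Fin n → V} :
    CSat G γ (.count p φ) a ↔ p ≤ Nat.card {v // CSat G γ φ (snoc a v)} := by
  classical
  have := Fintype.ofFinite V
  rw [Nat.card_eq_fintype_card, Fintype.card_subtype]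
  constructor
  · rintro ⟨s, rfl, hs⟩
    exact Finset.card_le_card fun v hv => Finset.mem_filter.2 ⟨Finset.mem_univ v, hs v hv⟩
  · intro h
    obtain ⟨s, hsub, rfl⟩ := Finset.exists_subset_card_eq h
    exact ⟨s, rfl, fun v hv => (Finset.mem_filter.1 (hsub hv)).2⟩

def CEquiv (k : ℕ) {n : ℕ} (a : Fin n → V) (a' : Fin n → V') : Prop :=
  ∀ φ : CFormula n, φ.qr ≤ k → (CSat G γ φ a ↔ CSat G' γ' φ a')

variable {G γ G' γ'} {n : ℕ} {a : Fin n → V} {a' : Fin n → V'}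

theorem cEquiv_of_atomic_of_count {k : ℕ} (heq : ∀ i j, a i = a j ↔ a' i = a' j)
    (hadj : ∀ i j, G.Adj (a i) (a j) ↔ G'.Adj (a' i) (a' j))
    (hcol : ∀ i, γ (a i) = γ' (a' i))
    (hcount : ∀ p (ψ : CFormula (n + 1)), ψ.qr < k →
      (CSat G γ (.count p ψ) a ↔ CSat G' γ' (.count p ψ) a')) :
    CEquiv G γ G' γ' k a a' := by
  intro φ hφ
  induction φ with
  | eq i j => exact heq i j
  | adj i j => exact hadj i j
  | col i c => exact iff_of_eq (congrArg (· = c) (hcol i))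
  | not φ ih => exact not_congr (ih heq hadj hcol hcount hφ)
  | or φ ψ ihφ ihψ =>
    exact or_congr (ihφ heq hadj hcol hcount (le_of_max_le_left hφ))
      (ihψ heq hadj hcol hcount (le_of_max_le_right hφ))
  | count p ψ => exact hcount p ψ hφ

theorem localIso_iff_cEquiv_zero {l : List (V × V')}
    (hl : ∀ p, p ∈ l ↔ ∃ i, (a i, a' i) = p) :
    LocalIso G γ G' γ' l ↔ CEquiv G γ G' γ' 0 a a' := by
  simp only [LocalIso, hl, forall_exists_index, forall_apply_eq_imp_iff]
  constructor
  · rintro ⟨hcol, h⟩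
    exact cEquiv_of_atomic_of_count (fun i j => (h i j).1) (fun i j => (h i j).2) hcol
      fun _ _ h => absurd h (Nat.not_lt_zero _)
  · intro h
    exact ⟨fun i => ((h (.col i (γ (a i))) le_rfl).1 rfl).symm,
      fun i j => ⟨h (.eq i j) le_rfl, h (.adj i j) le_rfl⟩⟩

theorem natCard_cSat_snoc_eq [Finite V] [Finite V'] {k : ℕ} (h : CEquiv G γ G' γ' (k + 1) a a')
    {φ : CFormula (n + 1)} (hφ : φ.qr ≤ k) :
    Nat.card {v // CSat G γ φ (snoc a v)} = Nat.card {v' // CSat G' γ' φ (snoc a' v')} := by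
  have hcount : ∀ p, CSat G γ (.count p φ) a ↔ CSat G' γ' (.count p φ) a' :=
    fun p => h (.count p φ) (Nat.succ_le_succ hφ)
  apply le_antisymm
  · exact (cSat_count_iff G' γ').1 ((hcount _).1 ((cSat_count_iff G γ).2 le_rfl))
  · exact (cSat_count_iff G γ).1 ((hcount _).2 ((cSat_count_iff G' γ').2 le_rfl))

theorem cEquiv_succ_of_equiv [Finite V] [Finite V'] {k : ℕ} (f : V ≃ V')
    (hf : ∀ v, CEquiv G γ G' γ' k (snoc a v) (snoc a' (f v))) :
    CEquiv G γ G' γ' (k + 1) a a' := by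
  refine cEquiv_of_atomic_of_count (fun i j => ?_) (fun i j => ?_) (fun i => ?_) fun p ψ hψ => ?_
  · simpa [CSat] using hf (a i) (.eq i.castSucc j.castSucc) (Nat.zero_le k)
  · simpa [CSat] using hf (a i) (.adj i.castSucc j.castSucc) (Nat.zero_le k)
  · simpa [CSat, eq_comm] using hf (a i) (.col i.castSucc (γ (a i))) (Nat.zero_le k)
  · rw [cSat_count_iff, cSat_count_iff,
      Nat.card_congr (f.subtypeEquiv (q := fun v' => CSat G' γ' ψ (snoc a' v'))
        fun v => hf v ψ (Nat.lt_succ_iff.1 hψ))]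

variable (G γ G' γ' a a')

/-- Extensions of `a` in `G` and of `a'` in `G'` are treated as points of one finite set, so
that a single formula can isolate a type on both sides at once. -/
def SatAt : V ⊕ V' → CFormula (n + 1) → Prop :=
  Sum.elim (fun v φ => CSat G γ φ (snoc a v)) (fun v' φ => CSat G' γ' φ (snoc a' v'))

def typeAt (k : ℕ) (x : V ⊕ V') : Set (CFormula (n + 1)) :=
  {φ | φ.qr ≤ k ∧ SatAt G γ G' γ' a a' x φ}

variable {G γ G' γ' a a'}

theorem satAt_not {x : V ⊕ V'} {φ : CFormula (n + 1)} :
    SatAt G γ G' γ' a a' x (.not φ) ↔ ¬ SatAt G γ G' γ' a a' x φ := by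
  cases x <;> rfl

theorem satAt_conj {x : V ⊕ V'} {L : List (CFormula (n + 1))} :
    SatAt G γ G' γ' a a' x (.conj L) ↔ ∀ φ ∈ L, SatAt G γ G' γ' a a' x φ := by
  cases x
  · exact cSat_conj G γ
  · exact cSat_conj G' γ'

theorem exists_separating_formula {k : ℕ} {x y : V ⊕ V'}
    (hxy : typeAt G γ G' γ' a a' k y ≠ typeAt G γ G' γ' a a' k x) :
    ∃ ψ : CFormula (n + 1), ψ.qr ≤ k ∧ SatAt G γ G' γ' a a' x ψ ∧ ¬ SatAt G γ G' γ' a a' y ψ := by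
  obtain ⟨φ, hφ⟩ := not_forall.1 (mt Set.ext hxy)
  have hφk : φ.qr ≤ k := by
    by_contra hk
    exact hφ (iff_of_false (fun h => hk h.1) (fun h => hk h.1))
  by_cases hx : SatAt G γ G' γ' a a' x φ
  · exact ⟨φ, hφk, hx, fun hy => hφ (iff_of_true ⟨hφk, hy⟩ ⟨hφk, hx⟩)⟩
  · refine ⟨.not φ, hφk, satAt_not.2 hx, fun hy => hφ ?_⟩
    exact iff_of_false (fun h => satAt_not.1 hy h.2) (fun h => hx h.2)

variable (a a') in
theorem exists_isolating_formula [Finite V] [Finite V'] (k : ℕ) (x : V ⊕ V') :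
    ∃ θ : CFormula (n + 1), θ.qr ≤ k ∧ ∀ y,
      SatAt G γ G' γ' a a' y θ ↔ typeAt G γ G' γ' a a' k y = typeAt G γ G' γ' a a' k x := by
  have := Fintype.ofFinite V
  have := Fintype.ofFinite V'
  have separate : ∀ y, ∃ ψ : CFormula (n + 1), ψ.qr ≤ k ∧ SatAt G γ G' γ' a a' x ψ ∧
      (SatAt G γ G' γ' a a' y ψ → typeAt G γ G' γ' a a' k y = typeAt G γ G' γ' a a' k x) := by
    intro y
    by_cases hxy : typeAt G γ G' γ' a a' k y = typeAt G γ G' γ' a a' k x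
    · exact ⟨.eq (last n) (last n), Nat.zero_le k, by cases x <;> rfl, fun _ => hxy⟩
    · obtain ⟨ψ, hψk, hψx, hψy⟩ := exists_separating_formula hxy
      exact ⟨ψ, hψk, hψx, fun hy => absurd hy hψy⟩
  choose ψ hψk hψx hψy using separate
  set θ : CFormula (n + 1) := .conj (Finset.univ.toList.map ψ)
  have hθk : θ.qr ≤ k := CFormula.qr_conj_le <| by
    simp only [List.forall_mem_map]
    exact fun y _ => hψk y
  have hθx : θ ∈ typeAt G γ G' γ' a a' k x := ⟨hθk, satAt_conj.2 <| by
    simp only [List.forall_mem_map]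
    exact fun y _ => hψx y⟩
  refine ⟨θ, hθk, fun y => ⟨fun hy => hψy y (satAt_conj.1 hy _ ?_), fun hy => (hy ▸ hθx).2⟩⟩
  exact List.mem_map_of_mem (Finset.mem_toList.2 (Finset.mem_univ y))

theorem natCard_typeAt_fiber_eq [Finite V] [Finite V'] {k : ℕ}
    (h : CEquiv G γ G' γ' (k + 1) a a') (t : Set (CFormula (n + 1))) :
    Nat.card {v // typeAt G γ G' γ' a a' k (.inl v) = t} =
      Nat.card {v' // typeAt G γ G' γ' a a' k (.inr v') = t} := by
  by_cases ht : ∃ x, typeAt G γ G' γ' a a' k x = t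
  · obtain ⟨x, rfl⟩ := ht
    obtain ⟨θ, hθk, hθ⟩ := exists_isolating_formula a a' k x
    calc Nat.card {v // typeAt G γ G' γ' a a' k (.inl v) = typeAt G γ G' γ' a a' k x}
        = Nat.card {v // CSat G γ θ (snoc a v)} :=
          Nat.card_congr (Equiv.subtypeEquivRight fun v => (hθ (.inl v)).symm)
      _ = Nat.card {v' // CSat G' γ' θ (snoc a' v')} := natCard_cSat_snoc_eq h hθk
      _ = _ := Nat.card_congr (Equiv.subtypeEquivRight fun v' => hθ (.inr v'))
  · rw [not_exists] at ht
    simp [ht]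

theorem CEquiv.exists_equiv_snoc [Finite V] [Finite V'] {k : ℕ}
    (h : CEquiv G γ G' γ' (k + 1) a a') :
    ∃ f : V ≃ V', ∀ v, CEquiv G γ G' γ' k (snoc a v) (snoc a' (f v)) := by
  have e := fun t => (Finite.card_eq.1 (natCard_typeAt_fiber_eq h t)).some
  refine ⟨Equiv.ofFiberEquiv e, fun v φ hφ => ?_⟩
  have := congrArg (φ ∈ ·) (Equiv.ofFiberEquiv_map e v)
  simp only [typeAt, Set.mem_ofPred_eq, hφ, true_and] at this
  exact iff_of_eq this.symm

theorem cEquiv_succ_iff [Finite V] [Finite V'] {k : ℕ} :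
    CEquiv G γ G' γ' (k + 1) a a' ↔
      ∃ f : V ≃ V', ∀ v, CEquiv G γ G' γ' k (snoc a v) (snoc a' (f v)) :=
  ⟨CEquiv.exists_equiv_snoc, fun ⟨f, hf⟩ => cEquiv_succ_of_equiv f hf⟩

theorem mem_cons_iff_exists_snoc {l : List (V × V')}
    (hl : ∀ p, p ∈ l ↔ ∃ i, (a i, a' i) = p) (v : V) (v' : V') (p : V × V') :
    p ∈ (v, v') :: l ↔
      ∃ i, ((snoc a v : Fin (n + 1) → V) i, (snoc a' v' : Fin (n + 1) → V') i) = p := by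
  simp [hl, exists_fin_succ', or_comm, eq_comm]

theorem dWin_iff_cEquiv [Finite V] [Finite V'] (k : ℕ) {l : List (V × V')}
    (hl : ∀ p, p ∈ l ↔ ∃ i, (a i, a' i) = p) :
    DWin G γ G' γ' k l ↔ CEquiv G γ G' γ' k a a' := by
  induction k generalizing n a a' l with
  | zero => exact localIso_iff_cEquiv_zero hl
  | succ k ih =>
    rw [cEquiv_succ_iff]
    exact exists_congr fun f => forall_congr' fun v => ih (mem_cons_iff_exists_snoc hl v (f v))

end

theorem stmt14_general {V V' : Type} [Fintype V] [Fintype V'] (k : ℕ)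
    (G : SimpleGraph V) (γ : V → ℕ) (G' : SimpleGraph V') (γ' : V' → ℕ) :
    DWin G γ G' γ' k [] ↔
      ∀ φ : CFormula 0, φ.qr ≤ k →
        (CSat G γ φ Fin.elim0 ↔ CSat G' γ' φ Fin.elim0) :=
  dWin_iff_cEquiv k (by simp)

/-- Hella's theorem: Duplicator wins the `k`-round bijective pebble game on `G, G'` iff
`G` and `G'` satisfy the same sentences of counting logic of quantifier rank at most `k`. -/
theorem stmt14 {V V' : Type} [Fintype V] [Fintype V'] (k : ℕ) (hk : 1 ≤ k)
    (G : SimpleGraph V) (γ : V → ℕ) (G' : SimpleGraph V') (γ' : V' → ℕ)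
    (hcard : Fintype.card V = Fintype.card V') :
    DWin G γ G' γ' k [] ↔
      ∀ φ : CFormula 0, φ.qr ≤ k →
        (CSat G γ φ Fin.elim0 ↔ CSat G' γ' φ Fin.elim0) :=
  stmt14_general k G γ G' γ'
end

section
/- Let G, G' be graphs with |G| = |G'| ≥ 2, v ∈ V(G), v' ∈ V(G') with γ(v) = γ(v'). Then Duplicator has a winning strategy in the k-round bijective pebble game on G, G' from initial position (v, v') if and only if Duplicator has a winning strategy in the k-round bijective pebble game on G∖v and G'∖v', where G∖v denotes G with v deleted and each remaining vertex w recoloured by (γ(w), [vw ∈ E(G)]). -/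
/-! A bijection that Duplicator plays from a position containing `(v, v')` must send `v` to `v'`,
since Spoiler could otherwise pebble `v`; so it restricts to a bijection `V ∖ v ≃ V' ∖ v'`, and
conversely every such bijection extends by `v ↦ v'`. A position containing `(v, v')` is a local
isomorphism of `G, G'` exactly when the rest of it is one of `G ∖ v, G' ∖ v'`, because the new
colours record adjacency to `v`. Induction on the number of rounds, over all positions, finishes. -/

section ExtendNe

variable {V V' : Type} [DecidableEq V] [DecidableEq V'] {v : V} {v' : V'}

def Equiv.extendNe (g : {w // w ≠ v} ≃ {w' // w' ≠ v'}) : V ≃ V' :=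
  (Equiv.optionSubtypeNe v).symm.trans (g.optionCongr.trans (Equiv.optionSubtypeNe v'))

theorem Equiv.extendNe_self (g : {w // w ≠ v} ≃ {w' // w' ≠ v'}) : Equiv.extendNe g v = v' := by
  simp [Equiv.extendNe]

theorem Equiv.extendNe_of_ne (g : {w // w ≠ v} ≃ {w' // w' ≠ v'}) {w : V} (hw : w ≠ v) :
    Equiv.extendNe g w = g ⟨w, hw⟩ := by
  simp [Equiv.extendNe, Equiv.optionSubtypeNe_symm_of_ne hw]

end ExtendNe

section Game

variable {V V' C : Type} {G : SimpleGraph V} {γ : V → C} {G' : SimpleGraph V'} {γ' : V' → C}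
  {k : ℕ} {l l' : List (V × V')}

theorem LocalIso.mono (h : l' ⊆ l) (hl : LocalIso G γ G' γ' l) : LocalIso G γ G' γ' l' :=
  ⟨fun p hp => hl.1 p (h hp), fun p hp q hq => hl.2 p (h hp) q (h hq)⟩

theorem DWin.mono (h : l' ⊆ l) (hl : DWin G γ G' γ' k l) : DWin G γ G' γ' k l' := by
  induction k generalizing l l' with
  | zero => exact LocalIso.mono h hl
  | succ k ih =>
    obtain ⟨f, hf⟩ := hl
    exact ⟨f, fun w => ih (List.cons_subset_cons _ h) (hf w)⟩

theorem DWin.of_succ (hl : DWin G γ G' γ' (k + 1) l) : DWin G γ G' γ' k l := by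
  induction k generalizing l with
  | zero =>
    obtain ⟨f, hf⟩ := hl
    cases isEmpty_or_nonempty V with
    | inl _ =>
      obtain rfl : l = [] := List.eq_nil_iff_forall_not_mem.2 fun p _ => isEmptyElim p.1
      exact ⟨nofun, nofun⟩
    | inr _ => exact (hf (Classical.arbitrary V)).mono (List.subset_cons_self _ _)
  | succ k ih =>
    obtain ⟨f, hf⟩ := hl
    exact ⟨f, fun w => ih (hf w)⟩

theorem DWin.localIso (hl : DWin G γ G' γ' k l) : LocalIso G γ G' γ' l := by
  induction k with
  | zero => exact hl
  | succ k ih => exact ih hl.of_succ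

theorem localIso_map_append_iff {v : V} {v' : V'} (hcol : γ v = γ' v')
    (L : List (↥{w : V | w ≠ v} × ↥{w' : V' | w' ≠ v'})) :
    LocalIso G γ G' γ' (L.map (Prod.map Subtype.val Subtype.val) ++ [(v, v')]) ↔
      LocalIso (G.induce {w : V | w ≠ v}) (fun w => (γ w.1, G.Adj v w.1))
        (G'.induce {w : V' | w ≠ v'}) (fun w => (γ' w.1, G'.Adj v' w.1)) L := by
  have hv (w : ↥{w : V | w ≠ v}) : (w : V) = v ↔ False := iff_false_intro w.2
  have hv' (w : ↥{w' : V' | w' ≠ v'}) : (w : V') = v' ↔ False := iff_false_intro w.2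
  simp only [LocalIso, List.forall_mem_append, List.forall_mem_map, List.forall_mem_singleton,
    Prod.map_fst, Prod.map_snd, Prod.mk.injEq, SimpleGraph.induce_adj, Subtype.ext_iff, hcol,
    eq_iff_iff, hv, hv', eq_comm (a := v), eq_comm (a := v'), SimpleGraph.irrefl, G.adj_comm _ v,
    G'.adj_comm _ v', forall₂_and]
  tauto

theorem dWin_map_append_iff [DecidableEq V] [DecidableEq V'] {v : V} {v' : V'}
    (hcol : γ v = γ' v') (k : ℕ) (L : List (↥{w : V | w ≠ v} × ↥{w' : V' | w' ≠ v'})) :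
    DWin G γ G' γ' k (L.map (Prod.map Subtype.val Subtype.val) ++ [(v, v')]) ↔
      DWin (G.induce {w : V | w ≠ v}) (fun w => (γ w.1, G.Adj v w.1))
        (G'.induce {w : V' | w ≠ v'}) (fun w => (γ' w.1, G'.Adj v' w.1)) k L := by
  induction k generalizing L with
  | zero => exact localIso_map_append_iff hcol L
  | succ k ih =>
    constructor
    · rintro ⟨f, hf⟩
      have hfv : f v = v' :=
        ((hf v).localIso.2 (v, f v) List.mem_cons_self (v, v') (by simp)).1.1 rfl
      exact ⟨f.subtypeEquiv fun w => (f.injective.ne_iff' hfv).symm, fun w => (ih _).1 (hf w)⟩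
    · rintro ⟨g, hg⟩
      refine ⟨Equiv.extendNe g, fun w => ?_⟩
      by_cases hw : w = v
      · subst hw
        rw [Equiv.extendNe_self]
        -- pebbling `v` adds nothing to the position, so one round fewer suffices
        exact ((ih L).2 (DWin.of_succ ⟨g, hg⟩)).mono (by simp)
      · rw [Equiv.extendNe_of_ne g hw]
        exact (ih (_ :: L)).2 (hg ⟨w, hw⟩)

end Game

theorem stmt15_general {V V' C : Type} [DecidableEq V] [DecidableEq V']
    (k : ℕ)
    (G : SimpleGraph V) (γ : V → C) (G' : SimpleGraph V') (γ' : V' → C)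
    (v : V) (v' : V') (hcol : γ v = γ' v') :
    DWin G γ G' γ' k [(v, v')] ↔
      DWin (G.induce {w : V | w ≠ v}) (fun w => (γ w.1, G.Adj v w.1))
        (G'.induce {w : V' | w ≠ v'}) (fun w => (γ' w.1, G'.Adj v' w.1)) k [] :=
  dWin_map_append_iff hcol k []

/-- Lemma (G ≀ v): Duplicator wins the `k`-round bijective pebble game on `G, G'` from
initial position `(v, v')` iff she wins the `k`-round game on the graphs obtained by
deleting `v` resp. `v'` and recolouring each remaining vertex `w` by the pair of its old
colour and its adjacency to the deleted vertex. -/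
theorem stmt15 {V V' C : Type} [Fintype V] [Fintype V'] [DecidableEq V] [DecidableEq V']
    (k : ℕ)
    (G : SimpleGraph V) (γ : V → C) (G' : SimpleGraph V') (γ' : V' → C)
    (hcard : Fintype.card V = Fintype.card V') (h2 : 2 ≤ Fintype.card V)
    (v : V) (v' : V') (hcol : γ v = γ' v') :
    DWin G γ G' γ' k [(v, v')] ↔
      DWin (G.induce {w : V | w ≠ v}) (fun w => (γ w.1, G.Adj v w.1))
        (G'.induce {w : V' | w ≠ v'}) (fun w => (γ' w.1, G'.Adj v' w.1)) k [] :=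
  stmt15_general k G γ G' γ' v v' hcol
end
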